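/- arXiv:1006.0407 — 4 statements merged into one kernel-verified Lean document; each statement's English description precedes it below -/
import Mathlib

section
/- Let A be an n×n real matrix, let ε > 0, and let Â ≠ 0 be obtained from A by zeroing out every entry with |A_ij| < ε/(2n); let p_ij = Â_ij²/‖Â‖_F². Then for every index pair (i,j) with Â_ij ≠ 0, the matrix M = (Â_ij/p_ij)·e_i e_j^T − Â satisfies ‖M‖ ≤ 4·n·‖Â‖_F²/ε, where ‖·‖ is the spectral norm. -/
open Matrix

/-- The spectral (operator) norm of a real square matrix. -/
noncomputable def specNorm {n : ℕ} (A : Matrix (Fin n) (Fin n) ℝ) : ℝ :=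
  ‖(Matrix.toEuclideanCLM (𝕜 := ℝ) A :
      EuclideanSpace ℝ (Fin n) →L[ℝ] EuclideanSpace ℝ (Fin n))‖

/-- The Frobenius norm of a real square matrix. -/
noncomputable def frobNorm {n : ℕ} (A : Matrix (Fin n) (Fin n) ℝ) : ℝ :=
  Real.sqrt (∑ i, ∑ j, (A i j) ^ 2)

lemma frobNorm_nonneg {n : ℕ} (A : Matrix (Fin n) (Fin n) ℝ) : 0 ≤ frobNorm A :=
  Real.sqrt_nonneg _

lemma spec_le_frob {n : ℕ} (A : Matrix (Fin n) (Fin n) ℝ) : specNorm A ≤ frobNorm A := by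
  refine ContinuousLinearMap.opNorm_le_bound _ (frobNorm_nonneg A) fun x => ?_
  have hx : (toEuclideanCLM (𝕜 := ℝ) A x : Fin n → ℝ) = A *ᵥ (x : Fin n → ℝ) := rfl
  rw [EuclideanSpace.norm_eq, EuclideanSpace.norm_eq]
  have key : ∑ i, ‖(toEuclideanCLM (𝕜 := ℝ) A x) i‖ ^ 2 ≤
      (∑ i, ∑ j, (A i j) ^ 2) * ∑ j, ‖x j‖ ^ 2 := by
    rw [Finset.sum_mul]
    refine Finset.sum_le_sum fun i _ => ?_
    have : (toEuclideanCLM (𝕜 := ℝ) A x) i = ∑ j, A i j * x j := by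
      rw [show (toEuclideanCLM (𝕜 := ℝ) A x) i = (A *ᵥ (x : Fin n → ℝ)) i from congrFun hx i]
      rfl
    rw [this]
    simp only [Real.norm_eq_abs, sq_abs]
    exact Finset.sum_mul_sq_le_sq_mul_sq _ _ _
  calc Real.sqrt (∑ i, ‖(toEuclideanCLM (𝕜 := ℝ) A x) i‖ ^ 2)
      ≤ Real.sqrt ((∑ i, ∑ j, (A i j) ^ 2) * ∑ j, ‖x j‖ ^ 2) := Real.sqrt_le_sqrt key
    _ = frobNorm A * Real.sqrt (∑ j, ‖x j‖ ^ 2) := by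
        rw [Real.sqrt_mul (by positivity)]; rfl

lemma spec_sub_le {n : ℕ} (A B : Matrix (Fin n) (Fin n) ℝ) :
    specNorm (A - B) ≤ specNorm A + specNorm B := by
  unfold specNorm
  rw [map_sub]
  exact norm_sub_le _ _

lemma frob_stdBasis {n : ℕ} (i j : Fin n) (c : ℝ) :
    frobNorm (c • Matrix.single i j (1 : ℝ)) = |c| := by
  unfold frobNorm
  have : ∀ i' j', (c • Matrix.single i j (1 : ℝ)) i' j' ^ 2 =
      if i = i' then (if j = j' then c ^ 2 else 0) else 0 := by
    intro i' j'
    simp only [Matrix.smul_apply, Matrix.single, Matrix.of_apply, smul_eq_mul, ← ite_and]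
    by_cases h : i = i' ∧ j = j' <;> simp [h, mul_pow]
  have h1 : ∀ i', (∑ j', if i = i' then (if j = j' then c ^ 2 else (0:ℝ)) else 0) =
      if i = i' then c ^ 2 else 0 := by
    intro i'
    by_cases h : i = i' <;> simp [h, Finset.sum_ite_eq]
  simp only [this, h1, Finset.sum_ite_eq, Finset.mem_univ, if_true]
  exact Real.sqrt_sq_eq_abs c

theorem sample_matrix_norm_bound_eps {n : ℕ} (hn : 1 ≤ n)
    (A : Matrix (Fin n) (Fin n) ℝ) (ε : ℝ) (hε : 0 < ε)
    (Ahat : Matrix (Fin n) (Fin n) ℝ)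
    (hAhat : ∀ i j, Ahat i j = if ε / (2 * n) ≤ |A i j| then A i j else 0)
    (hA0 : Ahat ≠ 0)
    (p : Fin n → Fin n → ℝ) (hp : ∀ i j, p i j = (Ahat i j) ^ 2 / frobNorm Ahat ^ 2)
    (i j : Fin n) (hij : Ahat i j ≠ 0) :
    specNorm ((Ahat i j / p i j) • Matrix.single i j (1 : ℝ) - Ahat) ≤
      4 * n * frobNorm Ahat ^ 2 / ε := by
  have hnpos : (0:ℝ) < n := by exact_mod_cast hn
  -- |Ahat i j| ≥ ε/(2n)
  have hentry : ε / (2 * n) ≤ |Ahat i j| := by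
    have := hAhat i j
    by_cases h : ε / (2 * n) ≤ |A i j|
    · rw [this, if_pos h]; exact h
    · rw [this, if_neg h] at hij; exact absurd rfl hij
  have hepos : 0 < ε / (2 * n) := by positivity
  have habs : 0 < |Ahat i j| := lt_of_lt_of_le hepos hentry
  -- frobNorm Ahat ≥ |Ahat i j|
  have hfge : |Ahat i j| ≤ frobNorm Ahat := by
    unfold frobNorm
    rw [← Real.sqrt_sq (abs_nonneg (Ahat i j)), sq_abs]
    apply Real.sqrt_le_sqrt
    calc Ahat i j ^ 2 ≤ ∑ j', Ahat i j' ^ 2 :=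
          Finset.single_le_sum (f := fun j' => Ahat i j' ^ 2)
            (fun _ _ => sq_nonneg _) (Finset.mem_univ j)
      _ ≤ ∑ i', ∑ j', Ahat i' j' ^ 2 :=
          Finset.single_le_sum (f := fun i' => ∑ j', Ahat i' j' ^ 2)
            (fun _ _ => Finset.sum_nonneg fun _ _ => sq_nonneg _) (Finset.mem_univ i)
  have hfpos : 0 < frobNorm Ahat := lt_of_lt_of_le habs hfge
  -- compute the coefficient
  have hc : Ahat i j / p i j = frobNorm Ahat ^ 2 / Ahat i j := by
    rw [hp i j]
    field_simp
  have habs_c : |Ahat i j / p i j| = frobNorm Ahat ^ 2 / |Ahat i j| := by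
    rw [hc, abs_div, abs_of_nonneg (by positivity : (0:ℝ) ≤ frobNorm Ahat ^ 2)]
  -- main bound pieces
  have hbound : frobNorm Ahat ^ 2 / |Ahat i j| ≤ 2 * n * frobNorm Ahat ^ 2 / ε := by
    rw [div_le_div_iff₀ habs hε]
    calc frobNorm Ahat ^ 2 * ε = (ε / (2*n)) * (2 * n * frobNorm Ahat ^ 2) := by
          field_simp
      _ ≤ |Ahat i j| * (2 * n * frobNorm Ahat ^ 2) := by
          apply mul_le_mul_of_nonneg_right hentry; positivity
      _ = 2 * n * frobNorm Ahat ^ 2 * |Ahat i j| := by ring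
  have hbound2 : frobNorm Ahat ≤ 2 * n * frobNorm Ahat ^ 2 / ε := by
    rw [le_div_iff₀ hε]
    calc frobNorm Ahat * ε = (ε / (2*n)) * (2 * n * frobNorm Ahat) := by field_simp
      _ ≤ frobNorm Ahat * (2 * n * frobNorm Ahat) := by
          apply mul_le_mul_of_nonneg_right (le_trans hentry hfge); positivity
      _ = 2 * n * frobNorm Ahat ^ 2 := by ring
  calc specNorm ((Ahat i j / p i j) • Matrix.single i j (1 : ℝ) - Ahat)
      ≤ specNorm ((Ahat i j / p i j) • Matrix.single i j (1 : ℝ)) + specNorm Ahat :=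
        spec_sub_le _ _
    _ ≤ |Ahat i j / p i j| + frobNorm Ahat := by
        apply add_le_add _ (spec_le_frob _)
        calc specNorm _ ≤ frobNorm ((Ahat i j / p i j) • Matrix.single i j (1 : ℝ)) :=
              spec_le_frob _
          _ = |Ahat i j / p i j| := frob_stdBasis i j _
    _ ≤ 2 * n * frobNorm Ahat ^ 2 / ε + 2 * n * frobNorm Ahat ^ 2 / ε := by
        apply add_le_add _ hbound2
        rw [habs_c]; exact hbound
    _ = 4 * n * frobNorm Ahat ^ 2 / ε := by ring
end

section
/- Let Â be a nonzero n×n real matrix, p_ij = Â_ij²/‖Â‖_F², and for each index pair (i,j) with Â_ij ≠ 0 set M_{ij} = (Â_ij/p_ij)·e_i e_j^T − Â. Then Σ_{(i,j): Â_ij ≠ 0} p_ij · M_{ij} M_{ij}^T = ‖Â‖_F² · D − Â Â^T, where D is the diagonal matrix whose i-th diagonal entry is m_i, the number of nonzero entries in the i-th row of Â. -/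
open Matrix

lemma stdBasis_transpose {n : ℕ} (i j : Fin n) (c : ℝ) :
    (Matrix.single i j c)ᵀ = Matrix.single j i c := by
  ext a b
  simp [Matrix.single, Matrix.transpose_apply, and_comm]

open Classical in
theorem second_moment_formula {n : ℕ} (Ahat : Matrix (Fin n) (Fin n) ℝ)
    (hA : Ahat ≠ 0)
    (p : Fin n → Fin n → ℝ) (hp : ∀ i j, p i j = (Ahat i j) ^ 2 / frobNorm Ahat ^ 2)
    (M : Fin n → Fin n → Matrix (Fin n) (Fin n) ℝ)
    (hM : ∀ i j, Ahat i j ≠ 0 →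
      M i j = (Ahat i j / p i j) • Matrix.single i j (1 : ℝ) - Ahat)
    (m : Fin n → ℕ)
    (hm : ∀ i, m i = (Finset.univ.filter (fun j => Ahat i j ≠ 0)).card) :
    (∑ q ∈ Finset.univ.filter (fun q : Fin n × Fin n => Ahat q.1 q.2 ≠ 0),
        p q.1 q.2 • (M q.1 q.2 * (M q.1 q.2)ᵀ))
      = frobNorm Ahat ^ 2 • Matrix.diagonal (fun i => (m i : ℝ)) - Ahat * Ahatᵀ := by
  set F : ℝ := frobNorm Ahat ^ 2 with hFdef
  have hF : F = ∑ i, ∑ j, Ahat i j ^ 2 := by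
    rw [hFdef, frobNorm, Real.sq_sqrt]
    positivity
  have hFpos : 0 < F := by
    obtain ⟨i, j, hij⟩ : ∃ i j, Ahat i j ≠ 0 := by
      by_contra h
      push_neg at h
      exact hA (by ext i j; simp [h])
    rw [hF]
    have h1 : 0 < ∑ j', Ahat i j' ^ 2 :=
      Finset.sum_pos' (fun _ _ => by positivity)
        ⟨j, Finset.mem_univ j, by positivity⟩
    exact Finset.sum_pos' (fun _ _ => by positivity) ⟨i, Finset.mem_univ i, h1⟩
  have hFne : F ≠ 0 := ne_of_gt hFpos
  set s : Finset (Fin n × Fin n) :=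
    Finset.univ.filter (fun q : Fin n × Fin n => Ahat q.1 q.2 ≠ 0) with hs
  -- key per-term identity
  have key : ∀ q ∈ s,
      p q.1 q.2 • (M q.1 q.2 * (M q.1 q.2)ᵀ) =
        F • Matrix.single q.1 q.1 (1 : ℝ)
          - Ahat q.1 q.2 • (Matrix.single q.1 q.2 (1 : ℝ) * Ahatᵀ)
          - Ahat q.1 q.2 • (Ahat * Matrix.single q.2 q.1 (1 : ℝ))
          + p q.1 q.2 • (Ahat * Ahatᵀ) := by
    rintro ⟨a, b⟩ hq
    have hab : Ahat a b ≠ 0 := by simpa [hs] using hq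
    have hpab : p a b = Ahat a b ^ 2 / F := hp a b
    have hpne : p a b ≠ 0 := by
      rw [hpab]
      positivity
    set c : ℝ := Ahat a b / p a b with hc
    have hpc : p a b * c = Ahat a b := by
      rw [hc, mul_div_cancel₀ _ hpne]
    have hpcc : p a b * (c * c) = F := by
      rw [← mul_assoc, hpc, hc, hpab]
      field_simp
    rw [hM a b hab]
    have expand : ((c • Matrix.single a b (1:ℝ) - Ahat) *
        (c • Matrix.single a b (1:ℝ) - Ahat)ᵀ) =
        (c * c) • Matrix.single a a (1:ℝ)
          - c • (Matrix.single a b (1:ℝ) * Ahatᵀ)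
          - c • (Ahat * Matrix.single b a (1:ℝ))
          + Ahat * Ahatᵀ := by
      rw [Matrix.transpose_sub, Matrix.transpose_smul, stdBasis_transpose]
      simp only [sub_mul, mul_sub, Matrix.smul_mul, Matrix.mul_smul, smul_smul,
        Matrix.single_mul_single_same, one_mul]
      abel
    rw [expand]
    simp only [smul_sub, smul_add, smul_smul, hpcc, hpc]
  rw [Finset.sum_congr rfl key]
  simp only [Finset.sum_add_distrib, Finset.sum_sub_distrib]
  have e1 : (∑ q ∈ s, F • Matrix.single q.1 q.1 (1 : ℝ))
      = F • Matrix.diagonal (fun i => (m i : ℝ)) := by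
    rw [← Finset.smul_sum]
    congr 1
    ext i k
    rw [Matrix.sum_apply]
    by_cases hik : i = k
    · subst hik
      rw [Matrix.diagonal_apply_eq]
      have : ∀ q ∈ s, Matrix.single q.1 q.1 (1:ℝ) i i
          = if q.1 = i then 1 else 0 := by
        rintro ⟨a, b⟩ _
        by_cases ha : a = i <;> simp [Matrix.single, ha]
      rw [Finset.sum_congr rfl this, Finset.sum_boole]
      rw [hm, hs]
      norm_cast
      rw [Finset.filter_filter]
      apply Finset.card_nbij (fun q => q.2)
      · rintro ⟨a, b⟩ hq
        simp only [Finset.mem_coe, Finset.mem_filter, Finset.mem_univ, true_and] at hq ⊢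
        rcases hq with ⟨h1, h2⟩
        subst h2
        exact h1
      · rintro ⟨a, b⟩ ha ⟨a', b'⟩ hb hab
        simp only [Finset.mem_coe, Finset.mem_filter, Finset.mem_univ, true_and] at ha hb
        simp only at hab
        obtain ⟨-, rfl⟩ := ha
        obtain ⟨-, rfl⟩ := hb
        rw [Prod.mk.injEq]
        exact ⟨rfl, hab⟩
      · intro j hj
        simp only [Finset.coe_filter, Finset.mem_univ, true_and, Set.mem_setOf_eq] at hj ⊢
        exact ⟨(i, j), ⟨hj, rfl⟩, rfl⟩
    · rw [Matrix.diagonal_apply_ne _ hik]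
      apply Finset.sum_eq_zero
      rintro ⟨a, b⟩ _
      simp only [Matrix.single, Matrix.of_apply, ite_eq_right_iff, and_imp]
      rintro rfl h
      exact absurd h hik
  have esum : (∑ q ∈ s, Ahat q.1 q.2 • Matrix.single q.1 q.2 (1 : ℝ)) = Ahat := by
    rw [hs, Finset.sum_filter_of_ne (by
      rintro ⟨a, b⟩ _ hne hz
      apply hne
      rw [hz, zero_smul])]
    rw [Fintype.sum_prod_type]
    conv_rhs => rw [Matrix.matrix_eq_sum_single Ahat]
    apply Finset.sum_congr rfl
    intro a _
    apply Finset.sum_congr rfl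
    intro b _
    rw [Matrix.smul_single, smul_eq_mul, mul_one]
  have e2 : (∑ q ∈ s, Ahat q.1 q.2 • (Matrix.single q.1 q.2 (1 : ℝ) * Ahatᵀ))
      = Ahat * Ahatᵀ := by
    calc (∑ q ∈ s, Ahat q.1 q.2 • (Matrix.single q.1 q.2 (1 : ℝ) * Ahatᵀ))
        = (∑ q ∈ s, Ahat q.1 q.2 • Matrix.single q.1 q.2 (1 : ℝ)) * Ahatᵀ := by
          rw [Finset.sum_mul]
          exact Finset.sum_congr rfl (fun q _ => (Matrix.smul_mul _ _ _).symm)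
      _ = Ahat * Ahatᵀ := by rw [esum]
  have esumT : (∑ q ∈ s, Ahat q.1 q.2 • Matrix.single q.2 q.1 (1 : ℝ)) = Ahatᵀ := by
    have h := congrArg Matrix.transpose esum
    rw [Matrix.transpose_sum] at h
    simp only [Matrix.transpose_smul, stdBasis_transpose] at h
    exact h
  have e3 : (∑ q ∈ s, Ahat q.1 q.2 • (Ahat * Matrix.single q.2 q.1 (1 : ℝ)))
      = Ahat * Ahatᵀ := by
    calc (∑ q ∈ s, Ahat q.1 q.2 • (Ahat * Matrix.single q.2 q.1 (1 : ℝ)))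
        = Ahat * (∑ q ∈ s, Ahat q.1 q.2 • Matrix.single q.2 q.1 (1 : ℝ)) := by
          rw [Finset.mul_sum]
          exact Finset.sum_congr rfl (fun q _ => (Matrix.mul_smul _ _ _).symm)
      _ = Ahat * Ahatᵀ := by rw [esumT]
  have e4 : (∑ q ∈ s, p q.1 q.2 • (Ahat * Ahatᵀ)) = Ahat * Ahatᵀ := by
    rw [← Finset.sum_smul]
    have hone : (∑ q ∈ s, p q.1 q.2) = 1 := by
      rw [hs, Finset.sum_filter_of_ne (by
        rintro ⟨a, b⟩ _ hne hz
        apply hne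
        rw [hp, hz]
        simp)]
      have : (∑ q : Fin n × Fin n, p q.1 q.2) = (∑ i, ∑ j, Ahat i j ^ 2) / F := by
        rw [Fintype.sum_prod_type, Finset.sum_div]
        apply Finset.sum_congr rfl
        intro i _
        rw [Finset.sum_div]
        exact Finset.sum_congr rfl fun j _ => hp i j
      rw [this, ← hF, div_self hFne]
    rw [hone, one_smul]
  rw [e1, e2, e3, e4]
  abel
end

section
/- Let Â be a nonzero n×n real matrix, p_ij = Â_ij²/‖Â‖_F², and for each (i,j) with Â_ij ≠ 0 set M_{ij} = (Â_ij/p_ij)·e_i e_j^T − Â, and let S = Σ_{(i,j): Â_ij ≠ 0} p_ij · M_{ij} M_{ij}^T. Then S satisfies the semidefinite (Loewner order) sandwich −Â Â^T ⪯ S ⪯ n·‖Â‖_F²·I_n, i.e., S + Â Â^T is positive semidefinite and n·‖Â‖_F²·I_n − S is positive semidefinite. -/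
open Matrix

private lemma psd_smul' {m : ℕ} {X : Matrix (Fin m) (Fin m) ℝ} (hX : X.PosSemidef) {c : ℝ}
    (hc : 0 ≤ c) : (c • X).PosSemidef := by
  refine ⟨?_, fun x => ?_⟩
  · unfold Matrix.IsHermitian
    rw [conjTranspose_smul, hX.1]
    simp
  · exact (hX.smul hc).2 x

private lemma psd_mul_transpose {m : ℕ} (A : Matrix (Fin m) (Fin m) ℝ) :
    (A * Aᵀ).PosSemidef := by
  simpa using posSemidef_self_mul_conjTranspose A

private lemma psd_sum {m : ℕ} {ι : Type*} (s : Finset ι) (f : ι → Matrix (Fin m) (Fin m) ℝ)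
    (hf : ∀ i ∈ s, (f i).PosSemidef) : (∑ i ∈ s, f i).PosSemidef := by
  classical
  induction s using Finset.induction with
  | empty => simpa using Matrix.PosSemidef.zero
  | insert _ _ hni ih =>
    rename_i a s
    rw [Finset.sum_insert hni]
    exact (hf a (Finset.mem_insert_self a s)).add
      (ih fun i hi => hf i (Finset.mem_insert_of_mem hi))

private lemma expand_sq {m : ℕ} (c : ℝ) (B A : Matrix (Fin m) (Fin m) ℝ) :
    (c • B - A) * (c • B - A)ᵀ
      = (c*c) • (B*Bᵀ) - c • (B*Aᵀ + A*Bᵀ) + A*Aᵀ := by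
  simp only [transpose_sub, transpose_smul, sub_mul, mul_sub, smul_mul_assoc,
    mul_smul_comm, smul_smul, smul_add]
  module

private lemma sum_smul_stdBasis {m : ℕ} (A : Matrix (Fin m) (Fin m) ℝ) :
    ∑ q : Fin m × Fin m, A q.1 q.2 • single q.1 q.2 (1:ℝ) = A := by
  simp only [smul_single, smul_eq_mul, mul_one]
  rw [Fintype.sum_prod_type]
  exact (matrix_eq_sum_single A).symm

private lemma stdBasis_mul_transpose {m : ℕ} (q : Fin m × Fin m) :
    (single q.1 q.2 (1:ℝ)) * (single q.1 q.2 (1:ℝ))ᵀ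
      = single q.1 q.1 (1:ℝ) := by
  have ht : (single q.1 q.2 (1:ℝ))ᵀ = single q.2 q.1 (1:ℝ) := by
    ext a b; simp [single, Matrix.transpose_apply, and_comm]
  rw [ht, single_mul_single_same, one_mul]

private lemma sum_stdBasis_sq {m : ℕ} :
    ∑ q : Fin m × Fin m, (single q.1 q.2 (1:ℝ)) * (single q.1 q.2 (1:ℝ))ᵀ
      = (m : ℝ) • (1 : Matrix (Fin m) (Fin m) ℝ) := by
  rw [Finset.sum_congr rfl (fun q _ => stdBasis_mul_transpose q)]
  ext k l
  simp only [Matrix.sum_apply, Matrix.smul_apply, Matrix.one_apply, single,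
    Matrix.of_apply, Fintype.sum_prod_type]
  by_cases hkl : k = l
  · subst hkl
    simp [Finset.sum_ite_eq', eq_comm]
  · rw [Finset.sum_eq_zero, if_neg hkl, smul_zero]
    intro i _
    rw [Finset.sum_eq_zero]
    intro j _
    rw [if_neg]
    rintro ⟨h1, h2⟩
    exact hkl (h1.symm.trans h2)

open Classical in
theorem second_moment_loewner_sandwich {n : ℕ} (Ahat : Matrix (Fin n) (Fin n) ℝ)
    (hA : Ahat ≠ 0)
    (p : Fin n → Fin n → ℝ) (hp : ∀ i j, p i j = (Ahat i j) ^ 2 / frobNorm Ahat ^ 2)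
    (M : Fin n → Fin n → Matrix (Fin n) (Fin n) ℝ)
    (hM : ∀ i j, Ahat i j ≠ 0 →
      M i j = (Ahat i j / p i j) • Matrix.single i j (1 : ℝ) - Ahat)
    (S : Matrix (Fin n) (Fin n) ℝ)
    (hS : S = ∑ q ∈ Finset.univ.filter (fun q : Fin n × Fin n => Ahat q.1 q.2 ≠ 0),
        p q.1 q.2 • (M q.1 q.2 * (M q.1 q.2)ᵀ)) :
    (S + Ahat * Ahatᵀ).PosSemidef ∧
    ((n * frobNorm Ahat ^ 2) • (1 : Matrix (Fin n) (Fin n) ℝ) - S).PosSemidef := by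
  set F : ℝ := frobNorm Ahat ^ 2 with hF
  set nz : Finset (Fin n × Fin n) :=
    Finset.univ.filter (fun q : Fin n × Fin n => Ahat q.1 q.2 ≠ 0) with hnz
  set B : Fin n × Fin n → Matrix (Fin n) (Fin n) ℝ :=
    fun q => single q.1 q.2 (1:ℝ) with hB
  have hsq : ∀ i j, (0:ℝ) ≤ (Ahat i j)^2 := fun i j => sq_nonneg _
  have hFsum : F = ∑ i, ∑ j, (Ahat i j) ^ 2 := by
    rw [hF, frobNorm, sq, Real.mul_self_sqrt]
    exact Finset.sum_nonneg fun i _ => Finset.sum_nonneg fun j _ => hsq i j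
  have hFpos : 0 < F := by
    obtain ⟨i, j, hij⟩ : ∃ i j, Ahat i j ≠ 0 := by
      by_contra h
      push_neg at h
      exact hA (by ext i j; simpa using h i j)
    have h1 : (Ahat i j)^2 ≤ ∑ j', (Ahat i j')^2 :=
      Finset.single_le_sum (fun j' _ => hsq i j') (Finset.mem_univ j)
    have h2 : ∑ j', (Ahat i j')^2 ≤ ∑ i', ∑ j', (Ahat i' j')^2 :=
      Finset.single_le_sum (fun i' _ => Finset.sum_nonneg fun j' _ => hsq i' j')
        (Finset.mem_univ i)
    have h0 : 0 < (Ahat i j)^2 := pow_pos (abs_pos.mpr hij) 2 |>.trans_le (by rw [sq_abs])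
    rw [hFsum]
    exact h0.trans_le (h1.trans h2)
  have hFne : F ≠ 0 := ne_of_gt hFpos
  have key : ∀ q ∈ nz, p q.1 q.2 • (M q.1 q.2 * (M q.1 q.2)ᵀ)
      = F • (B q * (B q)ᵀ) - Ahat q.1 q.2 • (B q * Ahatᵀ + Ahat * (B q)ᵀ)
        + p q.1 q.2 • (Ahat * Ahatᵀ) := by
    intro q hq
    have ha : Ahat q.1 q.2 ≠ 0 := by
      rw [hnz] at hq; simpa using (Finset.mem_filter.mp hq).2
    have hpq : p q.1 q.2 = (Ahat q.1 q.2)^2 / F := hp q.1 q.2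
    have hpne : p q.1 q.2 ≠ 0 := by
      rw [hpq]
      exact div_ne_zero (pow_ne_zero 2 ha) hFne
    have h1 : p q.1 q.2 * (Ahat q.1 q.2 / p q.1 q.2 * (Ahat q.1 q.2 / p q.1 q.2)) = F := by
      rw [hpq]; field_simp
    have h2 : p q.1 q.2 * (Ahat q.1 q.2 / p q.1 q.2) = Ahat q.1 q.2 := by
      field_simp
    rw [hM q.1 q.2 ha]
    simp only [hB]
    rw [expand_sq, smul_add, smul_sub, smul_smul, smul_smul, h1, h2]
  have hPsum : ∑ q ∈ nz, p q.1 q.2 = 1 := by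
    have hext : ∑ q ∈ nz, p q.1 q.2 = ∑ q : Fin n × Fin n, p q.1 q.2 := by
      refine Finset.sum_subset (Finset.subset_univ _) ?_
      intro q _ hq
      rw [hnz] at hq
      simp only [Finset.mem_filter, Finset.mem_univ, true_and, not_not] at hq
      rw [hp q.1 q.2, hq]
      simp
    rw [hext, Fintype.sum_prod_type]
    simp only [hp, ← Finset.sum_div]
    rw [← hFsum, div_self hFne]
  have hE : ∑ q ∈ nz, Ahat q.1 q.2 • B q = Ahat := by
    have hext : ∑ q ∈ nz, Ahat q.1 q.2 • B q = ∑ q : Fin n × Fin n, Ahat q.1 q.2 • B q := by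
      refine Finset.sum_subset (Finset.subset_univ _) ?_
      intro q _ hq
      rw [hnz] at hq
      simp only [Finset.mem_filter, Finset.mem_univ, true_and, not_not] at hq
      rw [hq, zero_smul]
    rw [hext, hB, sum_smul_stdBasis]
  have hmain : S = F • (∑ q ∈ nz, B q * (B q)ᵀ) - Ahat * Ahatᵀ := by
    rw [hS, Finset.sum_congr rfl key]
    rw [Finset.sum_add_distrib, Finset.sum_sub_distrib, ← Finset.smul_sum]
    have h3 : ∑ q ∈ nz, Ahat q.1 q.2 • (B q * Ahatᵀ + Ahat * (B q)ᵀ)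
        = Ahat * Ahatᵀ + Ahat * Ahatᵀ := by
      have heach : ∀ q, Ahat q.1 q.2 • (B q * Ahatᵀ + Ahat * (B q)ᵀ)
          = (Ahat q.1 q.2 • B q) * Ahatᵀ + Ahat * (Ahat q.1 q.2 • B q)ᵀ := by
        intro q
        rw [smul_add, smul_mul_assoc, transpose_smul, mul_smul_comm]
      rw [Finset.sum_congr rfl (fun q _ => heach q), Finset.sum_add_distrib,
        ← Finset.sum_mul, ← Finset.mul_sum, ← Matrix.transpose_sum, hE]
    have h4 : ∑ q ∈ nz, p q.1 q.2 • (Ahat * Ahatᵀ) = Ahat * Ahatᵀ := by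
      rw [← Finset.sum_smul, hPsum, one_smul]
    rw [h3, h4]
    abel
  constructor
  · have : S + Ahat * Ahatᵀ = F • (∑ q ∈ nz, B q * (B q)ᵀ) := by
      rw [hmain]; abel
    rw [this]
    exact psd_smul' (psd_sum _ _ fun q _ => psd_mul_transpose (B q)) hFpos.le
  · set nc : Finset (Fin n × Fin n) :=
      Finset.univ.filter (fun q : Fin n × Fin n => ¬ Ahat q.1 q.2 ≠ 0) with hnc
    have hsplit : (∑ q ∈ nz, B q * (B q)ᵀ) + (∑ q ∈ nc, B q * (B q)ᵀ)
        = (n : ℝ) • (1 : Matrix (Fin n) (Fin n) ℝ) := by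
      rw [hnz, hnc, Finset.sum_filter_add_sum_filter_not]
      exact sum_stdBasis_sq
    have hgoal : ((n : ℝ) * F) • (1 : Matrix (Fin n) (Fin n) ℝ) - S
        = F • (∑ q ∈ nc, B q * (B q)ᵀ) + Ahat * Ahatᵀ := by
      have : ((n : ℝ) * F) • (1 : Matrix (Fin n) (Fin n) ℝ)
          = F • ((n : ℝ) • (1 : Matrix (Fin n) (Fin n) ℝ)) := by
        rw [smul_smul, mul_comm]
      rw [this, ← hsplit, smul_add, hmain]
      abel
    rw [hgoal]
    exact (psd_smul' (psd_sum _ _ fun q _ => psd_mul_transpose (B q)) hFpos.le).add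
      (psd_mul_transpose Ahat)
end

section
/- Let Â be a nonzero n×n real matrix, p_ij = Â_ij²/‖Â‖_F², and for each (i,j) with Â_ij ≠ 0 set M_{ij} = (Â_ij/p_ij)·e_i e_j^T − Â. Then the expected second moment satisfies ‖Σ_{(i,j): Â_ij ≠ 0} p_ij · M_{ij} M_{ij}^T‖ ≤ n·‖Â‖_F², where ‖·‖ is the spectral norm. -/
open Matrix

lemma quad_bilin_symm {n : ℕ} (S : Matrix (Fin n) (Fin n) ℝ) (hsym : Sᵀ = S)
    (u v : Fin n → ℝ) : (S *ᵥ u) ⬝ᵥ v = (S *ᵥ v) ⬝ᵥ u := by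
  rw [dotProduct_comm, dotProduct_mulVec, ← mulVec_transpose, hsym]

lemma quad_sq_bound {n : ℕ} (S : Matrix (Fin n) (Fin n) ℝ) (c : ℝ) (hc : 0 ≤ c)
    (hsym : Sᵀ = S)
    (h0 : ∀ y : Fin n → ℝ, 0 ≤ (S *ᵥ y) ⬝ᵥ y)
    (hb : ∀ y : Fin n → ℝ, (S *ᵥ y) ⬝ᵥ y ≤ c * (y ⬝ᵥ y))
    (y : Fin n → ℝ) :
    (S *ᵥ y) ⬝ᵥ (S *ᵥ y) ≤ c ^ 2 * (y ⬝ᵥ y) := by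
  have hCS : ∀ u v : Fin n → ℝ,
      ((S *ᵥ u) ⬝ᵥ v) * ((S *ᵥ u) ⬝ᵥ v) ≤ ((S *ᵥ u) ⬝ᵥ u) * ((S *ᵥ v) ⬝ᵥ v) := by
    intro u v
    have h := discrim_le_zero (a := (S *ᵥ v) ⬝ᵥ v) (b := 2 * ((S *ᵥ u) ⬝ᵥ v))
      (c := (S *ᵥ u) ⬝ᵥ u) ?_
    · rw [discrim] at h; nlinarith
    · intro t
      have h1 := h0 (u + t • v)
      have hsymuv := quad_bilin_symm S hsym u v
      simp only [mulVec_add, mulVec_smul, add_dotProduct, dotProduct_add, smul_dotProduct,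
        dotProduct_smul, smul_eq_mul] at h1
      rw [← hsymuv] at h1
      ring_nf
      ring_nf at h1
      linarith
  have hself : ∀ v : Fin n → ℝ, 0 ≤ v ⬝ᵥ v := fun v =>
    Finset.sum_nonneg fun i _ => mul_self_nonneg (v i)
  have key := hCS y (S *ᵥ y)
  have h1 := hb y
  have h2 := hb (S *ᵥ y)
  have h3 := h0 y
  have h4 := hself y
  have h5 := hself (S *ᵥ y)
  rcases eq_or_lt_of_le h5 with h | h
  · rw [← h]; positivity
  · have hmul : ((S *ᵥ y) ⬝ᵥ y) * ((S *ᵥ (S *ᵥ y)) ⬝ᵥ (S *ᵥ y)) ≤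
        (c * (y ⬝ᵥ y)) * (c * ((S *ᵥ y) ⬝ᵥ (S *ᵥ y))) :=
      mul_le_mul h1 h2 (h0 _) (mul_nonneg hc h4)
    have hZZ : ((S *ᵥ y) ⬝ᵥ (S *ᵥ y)) * ((S *ᵥ y) ⬝ᵥ (S *ᵥ y)) ≤
        (c ^ 2 * (y ⬝ᵥ y)) * ((S *ᵥ y) ⬝ᵥ (S *ᵥ y)) := by nlinarith [key.trans hmul]
    exact le_of_mul_le_mul_right hZZ h

lemma specNorm_le_of_quadForm {n : ℕ} (S : Matrix (Fin n) (Fin n) ℝ) (c : ℝ) (hc : 0 ≤ c)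
    (hsym : Sᵀ = S)
    (h0 : ∀ y : Fin n → ℝ, 0 ≤ (S *ᵥ y) ⬝ᵥ y)
    (hb : ∀ y : Fin n → ℝ, (S *ᵥ y) ⬝ᵥ y ≤ c * (y ⬝ᵥ y)) :
    specNorm S ≤ c := by
  refine ContinuousLinearMap.opNorm_le_bound _ hc fun x => ?_
  obtain ⟨y, rfl⟩ : ∃ y : Fin n → ℝ, (WithLp.equiv 2 (Fin n → ℝ)).symm y = x :=
    ⟨WithLp.equiv 2 (Fin n → ℝ) x, rfl⟩
  have hTx : (Matrix.toEuclideanCLM (𝕜 := ℝ) S) ((WithLp.equiv 2 (Fin n → ℝ)).symm y) =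
      (WithLp.equiv 2 (Fin n → ℝ)).symm (S *ᵥ y) := by
    exact Matrix.toEuclideanCLM_toLp S y
  have hnorm : ∀ v : Fin n → ℝ,
      ‖(WithLp.equiv 2 (Fin n → ℝ)).symm v‖ ^ 2 = v ⬝ᵥ v := by
    intro v
    rw [EuclideanSpace.norm_eq, Real.sq_sqrt (by positivity)]
    exact Finset.sum_congr rfl fun i _ => by rw [Real.norm_eq_abs, sq_abs, sq]; rfl
  rw [hTx]
  have h2 : ‖(WithLp.equiv 2 (Fin n → ℝ)).symm (S *ᵥ y)‖ ^ 2 ≤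
      (c * ‖(WithLp.equiv 2 (Fin n → ℝ)).symm y‖) ^ 2 := by
    rw [hnorm, mul_pow, hnorm]
    exact quad_sq_bound S c hc hsym h0 hb y
  calc ‖(WithLp.equiv 2 (Fin n → ℝ)).symm (S *ᵥ y)‖
      = Real.sqrt (‖(WithLp.equiv 2 (Fin n → ℝ)).symm (S *ᵥ y)‖ ^ 2) :=
        (Real.sqrt_sq (norm_nonneg _)).symm
    _ ≤ Real.sqrt ((c * ‖(WithLp.equiv 2 (Fin n → ℝ)).symm y‖) ^ 2) := Real.sqrt_le_sqrt h2
    _ = c * ‖(WithLp.equiv 2 (Fin n → ℝ)).symm y‖ := Real.sqrt_sq (by positivity)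

lemma quadform_sum {n : ℕ} {ι : Type*} (s : Finset ι) (c : ι → ℝ)
    (B : ι → Matrix (Fin n) (Fin n) ℝ) (y : Fin n → ℝ) :
    ((∑ q ∈ s, c q • B q) *ᵥ y) ⬝ᵥ y = ∑ q ∈ s, c q * ((B q *ᵥ y) ⬝ᵥ y) := by
  let g : Matrix (Fin n) (Fin n) ℝ →+ ℝ :=
    { toFun := fun A => (A *ᵥ y) ⬝ᵥ y
      map_zero' := by simp
      map_add' := fun A B => by show ((A + B) *ᵥ y) ⬝ᵥ y = (A *ᵥ y) ⬝ᵥ y + (B *ᵥ y) ⬝ᵥ y; rw [add_mulVec, add_dotProduct] }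
  have := map_sum g (fun q => c q • B q) s
  simp only [g, AddMonoidHom.coe_mk, ZeroHom.coe_mk] at this
  rw [this]
  exact Finset.sum_congr rfl fun q _ => by
    rw [smul_mulVec, smul_dotProduct, smul_eq_mul]

set_option maxHeartbeats 1000000 in
open Classical in
theorem second_moment_norm_bound {n : ℕ} (Ahat : Matrix (Fin n) (Fin n) ℝ)
    (hA : Ahat ≠ 0)
    (p : Fin n → Fin n → ℝ) (hp : ∀ i j, p i j = (Ahat i j) ^ 2 / frobNorm Ahat ^ 2)
    (M : Fin n → Fin n → Matrix (Fin n) (Fin n) ℝ)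
    (hM : ∀ i j, Ahat i j ≠ 0 →
      M i j = (Ahat i j / p i j) • Matrix.single i j (1 : ℝ) - Ahat) :
    specNorm (∑ q ∈ Finset.univ.filter (fun q : Fin n × Fin n => Ahat q.1 q.2 ≠ 0),
        p q.1 q.2 • (M q.1 q.2 * (M q.1 q.2)ᵀ)) ≤ n * frobNorm Ahat ^ 2 := by
  set F : ℝ := ∑ i, ∑ j, (Ahat i j) ^ 2 with hFdef
  obtain ⟨i₀, j₀, hij₀⟩ : ∃ i j, Ahat i j ≠ 0 := by
    by_contra h; push_neg at h
    exact hA (by ext i j; simp [h])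
  have hF : 0 < F := by
    refine Finset.sum_pos' (fun i _ => Finset.sum_nonneg fun j _ => sq_nonneg _)
      ⟨i₀, Finset.mem_univ i₀, Finset.sum_pos' (fun j _ => sq_nonneg _)
        ⟨j₀, Finset.mem_univ j₀, by positivity⟩⟩
  have hfrob : frobNorm Ahat ^ 2 = F := by
    rw [frobNorm, Real.sq_sqrt (by positivity)]
  have hp' : ∀ i j, p i j = (Ahat i j) ^ 2 / F := fun i j => by rw [hp, hfrob]
  have hpnn : ∀ i j, 0 ≤ p i j := fun i j => by rw [hp']; positivity
  set s : Finset (Fin n × Fin n) :=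
    Finset.univ.filter (fun q : Fin n × Fin n => Ahat q.1 q.2 ≠ 0) with hs
  rw [hfrob]
  -- the quadratic form computation
  have hquad : ∀ y : Fin n → ℝ,
      ((∑ q ∈ s, p q.1 q.2 • (M q.1 q.2 * (M q.1 q.2)ᵀ)) *ᵥ y) ⬝ᵥ y =
        ∑ q ∈ s, p q.1 q.2 * (((M q.1 q.2)ᵀ *ᵥ y) ⬝ᵥ ((M q.1 q.2)ᵀ *ᵥ y)) := by
    intro y
    rw [quadform_sum]
    refine Finset.sum_congr rfl fun q _ => ?_
    congr 1
    rw [← mulVec_mulVec, dotProduct_comm, dotProduct_mulVec, ← mulVec_transpose]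
  refine specNorm_le_of_quadForm _ _ (by positivity) ?_ ?_ ?_
  · rw [transpose_sum]
    exact Finset.sum_congr rfl fun q _ => by
      rw [transpose_smul, transpose_mul, transpose_transpose]
  · intro y
    rw [hquad]
    exact Finset.sum_nonneg fun q _ => mul_nonneg (hpnn _ _)
      (Finset.sum_nonneg fun k _ => mul_self_nonneg _)
  · intro y
    rw [hquad]
    set w : Fin n → ℝ := fun k => ∑ l, Ahat l k * y l with hw
    set W : ℝ := ∑ k, w k * w k with hW
    have hWnn : 0 ≤ W := Finset.sum_nonneg fun k _ => mul_self_nonneg _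
    -- per-term formula
    have hterm : ∀ q ∈ s, p q.1 q.2 * (((M q.1 q.2)ᵀ *ᵥ y) ⬝ᵥ ((M q.1 q.2)ᵀ *ᵥ y)) =
        F * y q.1 ^ 2 - 2 * (Ahat q.1 q.2 * y q.1 * w q.2) + p q.1 q.2 * W := by
      rintro ⟨i, j⟩ hq
      rw [hs, Finset.mem_filter] at hq
      have ha : Ahat i j ≠ 0 := hq.2
      have hppos : 0 < p i j := by rw [hp']; positivity
      have hMe : ∀ l k, M i j l k =
          (Ahat i j / p i j) * (if i = l ∧ j = k then 1 else 0) - Ahat l k := by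
        intro l k
        rw [hM i j ha]
        simp [Matrix.single, Matrix.sub_apply, Matrix.smul_apply]
      have hv : ∀ k, ((M i j)ᵀ *ᵥ y) k =
          (if k = j then (Ahat i j / p i j) * y i else 0) - w k := by
        intro k
        have h1 : ((M i j)ᵀ *ᵥ y) k = ∑ l, M i j l k * y l := by
          simp [mulVec, dotProduct, Matrix.transpose_apply]
        rw [h1]
        simp_rw [hMe, sub_mul, Finset.sum_sub_distrib]
        congr 1
        by_cases hk : k = j
        · subst hk
          rw [Finset.sum_eq_single i (fun l _ hl => by simp [Ne.symm hl]) (by simp)]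
          simp
        · rw [Finset.sum_eq_zero fun l _ => by
            simp only [mul_ite, mul_one, mul_zero, ite_mul, zero_mul]
            rw [if_neg (by rintro ⟨-, h⟩; exact hk h.symm)]]
          simp [hk]
      have hsplit : ∀ k, ((M i j)ᵀ *ᵥ y) k * ((M i j)ᵀ *ᵥ y) k =
          w k * w k + (if k = j then (Ahat i j / p i j * y i) ^ 2
            - 2 * (Ahat i j / p i j * y i) * w k else 0) := by
        intro k
        rw [hv k]
        by_cases hk : k = j <;> simp [hk] <;> ring
      simp only [dotProduct, hsplit, Finset.sum_add_distrib, Finset.sum_ite_eq' Finset.univ,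
        Finset.mem_univ, if_true]
      have hpd : p i j * (Ahat i j / p i j * y i) = Ahat i j * y i := by
        field_simp
      have hpd2 : p i j * (Ahat i j / p i j * y i) ^ 2 = F * y i ^ 2 := by
        rw [hp']
        field_simp
      rw [mul_add, mul_sub, hpd2, ← hW]
      rw [show p i j * (2 * (Ahat i j / p i j * y i) * w j)
          = 2 * ((p i j * (Ahat i j / p i j * y i)) * w j) by ring, hpd]
      ring
    rw [Finset.sum_congr rfl hterm, Finset.sum_add_distrib, Finset.sum_sub_distrib,
      ← Finset.mul_sum, ← Finset.mul_sum, ← Finset.sum_mul]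
    -- the two auxiliary sums
    have hWsum : ∑ q ∈ s, Ahat q.1 q.2 * y q.1 * w q.2 = W := by
      rw [hs, Finset.sum_filter_of_ne (fun q _ hq => by
        intro h0; apply hq; rw [h0]; ring)]
      rw [Fintype.sum_prod_type, Finset.sum_comm, hW]
      refine Finset.sum_congr rfl fun j _ => ?_
      show ∑ x : Fin n, Ahat x j * y x * w j = w j * w j
      rw [← Finset.sum_mul]
    have hpsum : ∑ q ∈ s, p q.1 q.2 = 1 := by
      rw [hs, Finset.sum_filter_of_ne (fun q _ hq => by
        intro h0; apply hq; rw [hp', h0]; simp)]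
      rw [Fintype.sum_prod_type]
      simp_rw [hp']
      have hin : ∀ i : Fin n, ∑ j, Ahat i j ^ 2 / F = (∑ j, Ahat i j ^ 2) / F := by
        intro i; rw [Finset.sum_div]
      rw [Finset.sum_congr rfl fun i _ => hin i, ← Finset.sum_div, ← hFdef, div_self hF.ne']
    rw [hWsum, hpsum, one_mul]
    have hTle : ∑ q ∈ s, y q.1 ^ 2 ≤ n * (y ⬝ᵥ y) := by
      calc ∑ q ∈ s, y q.1 ^ 2 ≤ ∑ q : Fin n × Fin n, y q.1 ^ 2 :=
            Finset.sum_le_sum_of_subset_of_nonneg (Finset.filter_subset _ _)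
              (fun q _ _ => sq_nonneg _)
        _ = n * (y ⬝ᵥ y) := by
            rw [Fintype.sum_prod_type, dotProduct, Finset.mul_sum]
            refine Finset.sum_congr rfl fun i _ => ?_
            simp [sq, mul_comm]
    calc F * ∑ q ∈ s, y q.1 ^ 2 - 2 * W + W = F * (∑ q ∈ s, y q.1 ^ 2) - W := by ring
      _ ≤ F * (n * (y ⬝ᵥ y)) := by nlinarith
      _ = n * F * (y ⬝ᵥ y) := by ring
end
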